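/- arXiv:1508.05899 — 5 statements merged into one kernel-verified Lean document; each statement's English description precedes it below -/
import Mathlib

section
/- Let E, k, θ₀ > 0 and θ_max ≥ θ₀. For all θ with θ₀ ≤ θ ≤ θ_max, exp(-E/(k·θ)) ≥ exp(-E/(k·θ₀)) · exp(Θ/(1+ε·Θ_max)), where Θ = (θ-θ₀)·E/(k·θ₀²), Θ_max = (θ_max-θ₀)·E/(k·θ₀²), and ε = k·θ₀/E. -/
theorem wake_bazley_lower_bound (E k θ₀ θmax : ℝ)
    (hE : 0 < E) (hk : 0 < k) (h₀ : 0 < θ₀) (hmax : θ₀ ≤ θmax) :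
    ∀ θ : ℝ, θ₀ ≤ θ → θ ≤ θmax →
      Real.exp (-E / (k * θ)) ≥
        Real.exp (-E / (k * θ₀)) *
          Real.exp (((θ - θ₀) * E / (k * θ₀ ^ 2)) /
            (1 + (k * θ₀ / E) * ((θmax - θ₀) * E / (k * θ₀ ^ 2)))) := by
  intro θ h1 h2
  have hθ : 0 < θ := lt_of_lt_of_le h₀ h1
  have hθm : 0 < θmax := lt_of_lt_of_le h₀ hmax
  rw [ge_iff_le, ← Real.exp_add, Real.exp_le_exp]
  have hden : 1 + (k * θ₀ / E) * ((θmax - θ₀) * E / (k * θ₀ ^ 2)) = θmax / θ₀ := by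
    field_simp; ring
  rw [hden]
  have key : (θ - θ₀) * E / (k * θ₀ ^ 2) / (θmax / θ₀) = (θ - θ₀) * E / (k * θ₀ * θmax) := by
    field_simp
  rw [key]
  rw [div_add_div _ _ (by positivity : (k*θ₀:ℝ) ≠ 0) (by positivity : (k*θ₀*θmax:ℝ) ≠ 0),
    div_le_div_iff₀ (by positivity) (by positivity)]
  ring_nf
  nlinarith [mul_pos hk h₀, mul_pos hE hk, mul_nonneg (mul_nonneg hE.le (sub_nonneg.2 h1)) (mul_nonneg hk.le (mul_nonneg hk.le (mul_nonneg h₀.le (sub_nonneg.2 h2))))]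
end

section
/- Let F, Q : ℝ → ℝ, A, κ ∈ ℝ with Q(u) = A·u·F(u) + κ·u for all u. Suppose Φ : ℝⁿ → ℝ is twice continuously differentiable with ΔΦ + κ·Φ = 0. Then u(x,t) = e^{A t}·Φ(x) satisfies the reaction-diffusion equation F(u)·∂u/∂t = Δu + Q(u), where Δ is the spatial Laplacian. -/
/-- The Laplacian of a real-valued function on `ℝⁿ`, as the sum of second
directional derivatives along the coordinate directions. -/
noncomputable def lap {n : ℕ} (f : EuclideanSpace ℝ (Fin n) → ℝ)
    (x : EuclideanSpace ℝ (Fin n)) : ℝ :=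
  ∑ i : Fin n, iteratedFDeriv ℝ 2 f x
    ![EuclideanSpace.single i 1, EuclideanSpace.single i 1]

theorem lap_const_mul {n : ℕ} {f : EuclideanSpace ℝ (Fin n) → ℝ}
    {x : EuclideanSpace ℝ (Fin n)} (hf : ContDiffAt ℝ 2 f x) (c : ℝ) :
    lap (fun y => c * f y) x = c * lap f x := by
  rw [lap, lap, Finset.mul_sum]
  refine Finset.sum_congr rfl fun i _ => ?_
  change iteratedFDeriv ℝ 2 (c • f) x _ = _
  rw [iteratedFDeriv_const_smul_apply hf]
  rfl

theorem hasDerivAt_exp_mul_mul_const (A a t : ℝ) :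
    HasDerivAt (fun s => Real.exp (A * s) * a) (A * Real.exp (A * t) * a) t := by
  have hlin : HasDerivAt (fun s => A * s) A t := by
    simpa using (hasDerivAt_id t).const_mul A
  simpa only [mul_comm A] using hlin.exp.mul_const a

theorem nonclassical_separation (n : ℕ) (F Q : ℝ → ℝ) (A κ : ℝ)
    (hQ : ∀ u, Q u = A * u * F u + κ * u)
    (Φ : EuclideanSpace ℝ (Fin n) → ℝ) (hΦ : ContDiff ℝ 2 Φ)
    (hHelm : ∀ x, lap Φ x + κ * Φ x = 0) :
    ∀ (x : EuclideanSpace ℝ (Fin n)) (t : ℝ),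
      F (Real.exp (A * t) * Φ x) * deriv (fun s => Real.exp (A * s) * Φ x) t
        = lap (fun y => Real.exp (A * t) * Φ y) x
          + Q (Real.exp (A * t) * Φ x) := by
  intro x t
  have hlapΦ : lap Φ x = -(κ * Φ x) := eq_neg_of_add_eq_zero_left (hHelm x)
  rw [(hasDerivAt_exp_mul_mul_const A (Φ x) t).deriv, lap_const_mul hΦ.contDiffAt, hlapΦ, hQ]
  ring
end

section
/- Let R : (0,∞) → ℝ with 0 ≤ R(θ)/θ ≤ c for all θ > 0, where 0 < c < 1. For bounded measurable D, E : (0,∞) → ℝ with D(s) ≥ 1 and E(s) ≥ 1 for all s, define (MD)(θ) = D̄(θ)/(D̄(θ) − R(θ)/θ) where D̄(θ) = (1/θ)∫₀^θ D(s) ds, and similarly ME. Then for every θ > 0, |(MD)(θ) − (ME)(θ)| ≤ (c/(1−c)²)·sup_{s>0}|D(s) − E(s)|. -/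
open MeasureTheory intervalIntegral

lemma integrable_of_bdd_meas (F : ℝ → ℝ) (hF : Measurable F) (M : ℝ)
    (h1 : ∀ s : ℝ, 0 < s → 1 ≤ F s) (hM : ∀ s : ℝ, 0 < s → F s ≤ M)
    (θ : ℝ) (hθ : 0 < θ) : IntervalIntegrable F volume 0 θ := by
  rw [intervalIntegrable_iff_integrableOn_Ioc_of_le hθ.le]
  refine ⟨hF.aestronglyMeasurable.restrict, ?_⟩
  apply MeasureTheory.HasFiniteIntegral.of_bounded (C := |M|)
  filter_upwards [ae_restrict_mem measurableSet_Ioc] with s hs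
  have hs0 : 0 < s := hs.1
  rw [Real.norm_eq_abs, abs_le]
  constructor
  · linarith [h1 s hs0, abs_nonneg M]
  · linarith [hM s hs0, le_abs_self M]

lemma bar_ge_one (F : ℝ → ℝ) (hint : IntervalIntegrable F volume 0 θ)
    (h1 : ∀ s : ℝ, 0 < s → 1 ≤ F s) (hθ : 0 < θ) :
    1 ≤ (1 / θ) * ∫ s in (0:ℝ)..θ, F s := by
  have h : θ ≤ ∫ s in (0:ℝ)..θ, F s := by
    have := intervalIntegral.integral_mono_ae_restrict (μ := volume) (f := fun _ => (1:ℝ))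
      (g := F) hθ.le (intervalIntegrable_const) hint ?_
    · simpa using this
    · have hnull : (volume : Measure ℝ) ({0} : Set ℝ) = 0 := by simp
      rw [Filter.EventuallyLE, ae_restrict_iff' measurableSet_Icc]
      filter_upwards [measure_eq_zero_iff_ae_notMem.mp hnull] with s hs hsIcc
      rcases lt_or_eq_of_le hsIcc.1 with h0 | h0
      · exact h1 s h0
      · exact absurd h0.symm (by simpa using hs)
  rw [one_div, inv_mul_eq_div, le_div_iff₀ hθ]
  linarith

theorem contraction_estimate (R : ℝ → ℝ) (c : ℝ) (hc0 : 0 < c) (hc1 : c < 1)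
    (hR : ∀ θ : ℝ, 0 < θ → 0 ≤ R θ / θ ∧ R θ / θ ≤ c)
    (D E : ℝ → ℝ) (hDmeas : Measurable D) (hEmeas : Measurable E)
    (hMD : ∃ M, ∀ s : ℝ, 0 < s → D s ≤ M)
    (hME : ∃ M, ∀ s : ℝ, 0 < s → E s ≤ M)
    (hD1 : ∀ s : ℝ, 0 < s → 1 ≤ D s) (hE1 : ∀ s : ℝ, 0 < s → 1 ≤ E s)
    (δ : ℝ) (hδ : ∀ s : ℝ, 0 < s → |D s - E s| ≤ δ) :
    ∀ θ : ℝ, 0 < θ →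
      |((1 / θ) * ∫ s in (0:ℝ)..θ, D s) / ((1 / θ) * (∫ s in (0:ℝ)..θ, D s) - R θ / θ)
        - ((1 / θ) * ∫ s in (0:ℝ)..θ, E s) / ((1 / θ) * (∫ s in (0:ℝ)..θ, E s) - R θ / θ)|
      ≤ (c / (1 - c) ^ 2) * δ := by
  intro θ hθ
  obtain ⟨MD, hMDb⟩ := hMD
  obtain ⟨ME, hMEb⟩ := hME
  have hDint := integrable_of_bdd_meas D hDmeas MD hD1 hMDb θ hθ
  have hEint := integrable_of_bdd_meas E hEmeas ME hE1 hMEb θ hθ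
  set x := (1 / θ) * ∫ s in (0:ℝ)..θ, D s with hx
  set y := (1 / θ) * ∫ s in (0:ℝ)..θ, E s with hy
  set r := R θ / θ with hr
  have hx1 : 1 ≤ x := bar_ge_one D hDint hD1 hθ
  have hy1 : 1 ≤ y := bar_ge_one E hEint hE1 hθ
  obtain ⟨hr0, hrc⟩ := hR θ hθ
  have hδ0 : 0 ≤ δ := le_trans (abs_nonneg _) (hδ 1 one_pos)
  have hxy : |x - y| ≤ δ := by
    have hsub : x - y = (1 / θ) * ∫ s in (0:ℝ)..θ, (D s - E s) := by
      rw [intervalIntegral.integral_sub hDint hEint]; ring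
    have hnorm : ‖∫ s in (0:ℝ)..θ, (D s - E s)‖ ≤ δ * |θ - 0| := by
      apply intervalIntegral.norm_integral_le_of_norm_le_const
      intro s hs
      rw [Set.uIoc_of_le hθ.le] at hs
      exact hδ s hs.1
    rw [hsub, abs_mul, abs_of_pos (by positivity : (0:ℝ) < 1/θ)]
    rw [Real.norm_eq_abs] at hnorm
    calc 1/θ * |∫ s in (0:ℝ)..θ, (D s - E s)| ≤ 1/θ * (δ * |θ - 0|) := by
          apply mul_le_mul_of_nonneg_left hnorm (by positivity)
      _ = δ := by rw [sub_zero, abs_of_pos hθ]; field_simp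
  -- now pure algebra
  have hxr : 1 - c ≤ x - r := by linarith
  have hyr : 1 - c ≤ y - r := by linarith
  have hxrpos : 0 < x - r := lt_of_lt_of_le (by linarith) hxr
  have hyrpos : 0 < y - r := lt_of_lt_of_le (by linarith) hyr
  have key : x / (x - r) - y / (y - r) = (r * (y - x)) / ((x - r) * (y - r)) := by
    field_simp
    ring
  have hr0' : 0 ≤ r := hr0
  rw [key, abs_div, abs_mul, abs_mul, abs_of_pos hxrpos, abs_of_pos hyrpos,
    abs_of_nonneg hr0']
  have h1 : r * |y - x| ≤ c * δ := by
    apply mul_le_mul hrc (by rw [abs_sub_comm]; exact hxy) (abs_nonneg _) hc0.le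
  have h2 : (1 - c) ^ 2 ≤ (x - r) * (y - r) := by nlinarith
  calc r * |y - x| / ((x - r) * (y - r)) ≤ c * δ / (1 - c) ^ 2 :=
        div_le_div₀ (by positivity) h1 (pow_pos (by linarith) 2) h2
    _ = c / (1 - c) ^ 2 * δ := by ring
end

section
/- Let R : (0,∞) → ℝ with 0 ≤ R(θ)/θ ≤ c < 1 for all θ > 0, and let D : (0,∞) → ℝ be measurable with 1 ≤ D(s) ≤ 1/(1−c) for all s. Then the function (MD)(θ) = D̄(θ)/(D̄(θ) − R(θ)/θ), with D̄(θ) = (1/θ)∫₀^θ D(s) ds, also satisfies 1 ≤ (MD)(θ) ≤ 1/(1−c) for all θ > 0. -/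
open MeasureTheory Set

lemma one_le_div_sub {x a : ℝ} (ha : 0 ≤ a) (hax : a < x) : 1 ≤ x / (x - a) := by
  rw [le_div_iff₀ (sub_pos.mpr hax)]
  linarith

/-- Cross-multiplied, this is `a ≤ c * x`, which holds as `a ≤ c ≤ c * x`. -/
lemma div_sub_le_one_div_one_sub {x a c : ℝ} (hx : 1 ≤ x) (ha : 0 ≤ a) (hac : a ≤ c)
    (hc : c < 1) : x / (x - a) ≤ 1 / (1 - c) := by
  rw [div_le_div_iff₀ (by linarith) (by linarith)]
  nlinarith

lemma intervalIntegrable_of_mem_Icc {f : ℝ → ℝ} {a b m M : ℝ} (hab : a ≤ b)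
    (hf : Measurable f) (hfb : ∀ s ∈ Ioc a b, f s ∈ Icc m M) :
    IntervalIntegrable f volume a b := by
  refine (intervalIntegrable_const (c := max |m| |M|)).mono_fun' hf.aestronglyMeasurable ?_
  rw [uIoc_of_le hab]
  filter_upwards [ae_restrict_mem measurableSet_Ioc] with s hs
  exact abs_le_max_abs_abs (hfb s hs).1 (hfb s hs).2

lemma le_inv_mul_intervalIntegral {f : ℝ → ℝ} {a b m : ℝ} (hab : a < b)
    (hf : IntervalIntegrable f volume a b) (hm : ∀ s ∈ Ioc a b, m ≤ f s) :
    m ≤ (1 / (b - a)) * ∫ s in a..b, f s := by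
  have hmono : ∫ _ in a..b, m ≤ ∫ s in a..b, f s :=
    intervalIntegral.integral_mono_on_of_le_Ioo hab.le intervalIntegrable_const hf
      fun s hs ↦ hm s (Ioo_subset_Ioc_self hs)
  rw [intervalIntegral.integral_const, smul_eq_mul] at hmono
  rw [one_div, inv_mul_eq_div, le_div_iff₀ (sub_pos.mpr hab)]
  linarith

theorem map_preserves_bounds_general (R : ℝ → ℝ) (c : ℝ) (hc1 : c < 1)
    (hR : ∀ θ : ℝ, 0 < θ → 0 ≤ R θ / θ ∧ R θ / θ ≤ c)
    (D : ℝ → ℝ) (hDmeas : Measurable D)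
    (hD : ∀ s : ℝ, 0 < s → 1 ≤ D s ∧ D s ≤ 1 / (1 - c)) :
    ∀ θ : ℝ, 0 < θ →
      1 ≤ ((1 / θ) * ∫ s in (0:ℝ)..θ, D s) /
            ((1 / θ) * (∫ s in (0:ℝ)..θ, D s) - R θ / θ) ∧
      ((1 / θ) * ∫ s in (0:ℝ)..θ, D s) /
            ((1 / θ) * (∫ s in (0:ℝ)..θ, D s) - R θ / θ) ≤ 1 / (1 - c) := by
  intro θ hθ
  obtain ⟨hR0, hRc⟩ := hR θ hθ
  have hint : IntervalIntegrable D volume 0 θ :=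
    intervalIntegrable_of_mem_Icc hθ.le hDmeas fun s hs ↦ hD s hs.1
  have hmean : 1 ≤ (1 / θ) * ∫ s in (0:ℝ)..θ, D s := by
    simpa using le_inv_mul_intervalIntegral hθ hint fun s hs ↦ (hD s hs.1).1
  exact ⟨one_le_div_sub hR0 (by linarith), div_sub_le_one_div_one_sub hmean hR0 hRc hc1⟩

theorem map_preserves_bounds (R : ℝ → ℝ) (c : ℝ) (hc0 : 0 ≤ c) (hc1 : c < 1)
    (hR : ∀ θ : ℝ, 0 < θ → 0 ≤ R θ / θ ∧ R θ / θ ≤ c)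
    (D : ℝ → ℝ) (hDmeas : Measurable D)
    (hD : ∀ s : ℝ, 0 < s → 1 ≤ D s ∧ D s ≤ 1 / (1 - c)) :
    ∀ θ : ℝ, 0 < θ →
      1 ≤ ((1 / θ) * ∫ s in (0:ℝ)..θ, D s) /
            ((1 / θ) * (∫ s in (0:ℝ)..θ, D s) - R θ / θ) ∧
      ((1 / θ) * ∫ s in (0:ℝ)..θ, D s) /
            ((1 / θ) * (∫ s in (0:ℝ)..θ, D s) - R θ / θ) ≤ 1 / (1 - c) :=
  map_preserves_bounds_general R c hc1 hR D hDmeas hD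
end

section
/- Let A, κ ∈ ℝ with A ≠ 0, and let R : I → ℝ be differentiable on an open interval I. Suppose u : I → ℝ is differentiable with u'(θ) = A·u(θ)/(R(θ) − κ·u(θ)) and R(θ) − κ·u(θ) ≠ 0 on I. Then D := u' satisfies, wherever D is differentiable and R ≠ 0, the ODE A·D'(θ) = D³·κ²/R(θ) + D²·κ·(2A − R'(θ))/R(θ) + D·A·(A − R'(θ))/R(θ). -/
/-!
Differentiating `D = A u / (R - κ u)` by the quotient rule gives
`D' = A u (A R - R' (R - κ u)) / (R - κ u)³`. On the other side, the right-hand side of the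
claimed ODE factors as `D (A + κ D) (A + κ D - R') / R`, and `A + κ D = A R / (R - κ u)`,
so both sides agree after clearing denominators.
-/

open Filter Topology

theorem hasDerivAt_deriv_of_eventually_hasDerivAt_div {A κ r' θ : ℝ} {R u : ℝ → ℝ}
    (hu : ∀ᶠ t in 𝓝 θ, HasDerivAt u (A * u t / (R t - κ * u t)) t)
    (hR : HasDerivAt R r' θ) (hne : R θ - κ * u θ ≠ 0) :
    HasDerivAt (deriv u)
      (A * u θ * (A * R θ - r' * (R θ - κ * u θ)) / (R θ - κ * u θ) ^ 3) θ := by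
  have hderiv : deriv u =ᶠ[𝓝 θ] fun t => A * u t / (R t - κ * u t) :=
    hu.mono fun t ht => ht.deriv
  have huθ : HasDerivAt u (A * u θ / (R θ - κ * u θ)) θ := hu.self_of_nhds
  have hquot : HasDerivAt (fun t => A * u t / (R t - κ * u t)) _ θ :=
    (huθ.const_mul A).div (hR.sub (huθ.const_mul κ)) hne
  refine (hquot.congr_of_eventuallyEq hderiv).congr_deriv ?_
  -- `field_simp` looks for the denominator in its own normal form `R θ - u θ * κ`
  rw [mul_comm κ] at hne
  field_simp
  ring

theorem mul_deriv_diffusivity_eq {A κ r' R u : ℝ} (hR : R ≠ 0) :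
    A * (A * u * (A * R - r' * (R - κ * u)) / (R - κ * u) ^ 3) =
      (A * u / (R - κ * u)) ^ 3 * κ ^ 2 / R +
      (A * u / (R - κ * u)) ^ 2 * κ * (2 * A - r') / R +
      (A * u / (R - κ * u)) * A * (A - r') / R := by
  field_simp
  ring

theorem diffusivity_ode_general (a b A κ : ℝ) (R R' u : ℝ → ℝ)
    (hR : ∀ θ ∈ Set.Ioo a b, HasDerivAt R (R' θ) θ)
    (hne : ∀ θ ∈ Set.Ioo a b, R θ - κ * u θ ≠ 0)
    (hu : ∀ θ ∈ Set.Ioo a b, HasDerivAt u (A * u θ / (R θ - κ * u θ)) θ) :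
    ∀ θ ∈ Set.Ioo a b, R θ ≠ 0 → DifferentiableAt ℝ (deriv u) θ →
      A * deriv (deriv u) θ =
        (deriv u θ) ^ 3 * κ ^ 2 / R θ +
        (deriv u θ) ^ 2 * κ * (2 * A - R' θ) / R θ +
        (deriv u θ) * A * (A - R' θ) / R θ := by
  intro θ hθ hRθ _
  have hu_near : ∀ᶠ t in 𝓝 θ, HasDerivAt u (A * u t / (R t - κ * u t)) t :=
    eventually_of_mem (isOpen_Ioo.mem_nhds hθ) hu
  rw [(hasDerivAt_deriv_of_eventually_hasDerivAt_div hu_near (hR θ hθ) (hne θ hθ)).deriv,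
    (hu θ hθ).deriv]
  exact mul_deriv_diffusivity_eq hRθ

theorem diffusivity_ode (a b A κ : ℝ) (hA : A ≠ 0) (R R' u : ℝ → ℝ)
    (hR : ∀ θ ∈ Set.Ioo a b, HasDerivAt R (R' θ) θ)
    (hne : ∀ θ ∈ Set.Ioo a b, R θ - κ * u θ ≠ 0)
    (hu : ∀ θ ∈ Set.Ioo a b, HasDerivAt u (A * u θ / (R θ - κ * u θ)) θ) :
    ∀ θ ∈ Set.Ioo a b, R θ ≠ 0 → DifferentiableAt ℝ (deriv u) θ →
      A * deriv (deriv u) θ =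
        (deriv u θ) ^ 3 * κ ^ 2 / R θ +
        (deriv u θ) ^ 2 * κ * (2 * A - R' θ) / R θ +
        (deriv u θ) * A * (A - R' θ) / R θ :=
  diffusivity_ode_general a b A κ R R' u hR hne hu
end
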